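/- arXiv:2101.08380 — 6 statements merged into one kernel-verified Lean document; each statement's English description precedes it below -/
import Mathlib

section
/- For nonnegative reals r, a, c and strictly positive reals s, b, d with a/b ≥ c/d, we have (r+c)²/(s+d) ≤ max{r²/s, (r+a+c)²/(s+b+d)}. -/
/-!
The map `(x, y) ↦ x ^ 2 / y` is the perspective of `x ↦ x ^ 2`, hence jointly convex on `y > 0`.
With `θ = d / (b + d)`, the point `(r + θ (a + c), s + d)` is the `θ`-combination of `(r, s)` and
`(r + a + c, s + b + d)`, so its value is at most the maximum of the two endpoint values. The
ratio hypothesis `c / d ≤ a / b` says exactly `c ≤ θ (a + c)`, and `x ^ 2 / (s + d)` is monotone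
in `x ≥ 0`.
-/

lemma add_sq_div_add_le {u v p q : ℝ} (hp : 0 < p) (hq : 0 < q) :
    (u + v) ^ 2 / (p + q) ≤ u ^ 2 / p + v ^ 2 / q := by
  simpa [Fin.sum_univ_two] using
    Finset.sq_sum_div_le_sum_sq_div Finset.univ ![u, v] (g := ![p, q])
      (by simp [Fin.forall_fin_two, hp, hq])

lemma sq_div_combo_le {x₁ x₂ y₁ y₂ α β : ℝ} (hy₁ : 0 < y₁) (hy₂ : 0 < y₂)
    (hα : 0 < α) (hβ : 0 < β) :
    (α * x₁ + β * x₂) ^ 2 / (α * y₁ + β * y₂) ≤ α * (x₁ ^ 2 / y₁) + β * (x₂ ^ 2 / y₂) := by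
  have homogeneous {t x y : ℝ} (ht : t ≠ 0) : (t * x) ^ 2 / (t * y) = t * (x ^ 2 / y) := by
    field_simp
  simpa only [homogeneous hα.ne', homogeneous hβ.ne'] using
    add_sq_div_add_le (u := α * x₁) (v := β * x₂) (mul_pos hα hy₁) (mul_pos hβ hy₂)

theorem lemma_A1_general (r a c s b d : ℝ) (hr : 0 ≤ r) (hc : 0 ≤ c)
    (hs : 0 < s) (hb : 0 < b) (hd : 0 < d) (hratio : a * d ≥ c * b) :
    (r + c) ^ 2 / (s + d) ≤ max (r ^ 2 / s) ((r + a + c) ^ 2 / (s + b + d)) := by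
  have hbd : 0 < b + d := by positivity
  obtain ⟨θ, hθ⟩ : ∃ θ, θ = d / (b + d) := ⟨_, rfl⟩
  have hθ_pos : 0 < θ := by rw [hθ]; positivity
  have hθ_compl : 1 - θ = b / (b + d) := by rw [hθ]; field_simp; ring
  have hθ_compl_pos : 0 < 1 - θ := by rw [hθ_compl]; positivity
  have hc_le : c ≤ θ * (a + c) := by
    rw [hθ, div_mul_eq_mul_div, le_div_iff₀ hbd]
    linarith
  calc (r + c) ^ 2 / (s + d)
      ≤ (r + θ * (a + c)) ^ 2 / (s + d) := by gcongr
    _ = ((1 - θ) * r + θ * (r + a + c)) ^ 2 / ((1 - θ) * s + θ * (s + b + d)) := by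
        congr 1
        · ring
        · rw [hθ_compl, hθ]; field_simp; ring
    _ ≤ (1 - θ) * (r ^ 2 / s) + θ * ((r + a + c) ^ 2 / (s + b + d)) :=
        sq_div_combo_le hs (by positivity) hθ_compl_pos hθ_pos
    _ ≤ max (r ^ 2 / s) ((r + a + c) ^ 2 / (s + b + d)) :=
        Convex.combo_le_max _ _ hθ_compl_pos.le hθ_pos.le (by ring)

theorem lemma_A1 (r a c s b d : ℝ) (hr : 0 ≤ r) (ha : 0 ≤ a) (hc : 0 ≤ c)
    (hs : 0 < s) (hb : 0 < b) (hd : 0 < d) (hratio : a * d ≥ c * b) :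
    (r + c) ^ 2 / (s + d) ≤ max (r ^ 2 / s) ((r + a + c) ^ 2 / (s + b + d)) :=
  lemma_A1_general r a c s b d hr hc hs hb hd hratio
end

section
/- Let g : I → ℝ and h : I → ℝ with h strictly positive on a finite set I, λ ≥ 0, and define obj(J) = (∑_{i∈J} g i)² / (λ + ∑_{i∈J} h i) for nonempty J ⊆ I (and obj(∅) = 0). If J ⊆ I maximizes obj among all subsets of I and J is nonempty with ∑_{i∈J} g i ≥ 0, then removing any j ∈ J with g j < 0 strictly increases obj; hence an optimal J satisfies J ⊆ {i : g i > 0} or J ⊆ {i : g i < 0}. -/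
/-- If `J` is obj-optimal over subsets of `I`, then either all gradients in `J` are
positive, or all are negative, or `obj J = 0`. -/
theorem optimal_subset_same_sign {ι : Type*} [DecidableEq ι] (I : Finset ι)
    (g h : ι → ℝ) (hpos : ∀ i ∈ I, 0 < h i) (lam : ℝ) (hlam : 0 ≤ lam)
    (obj : Finset ι → ℝ)
    (hobj : ∀ J, obj J = (∑ i ∈ J, g i) ^ 2 / (lam + ∑ i ∈ J, h i))
    (J : Finset ι) (hJI : J ⊆ I)
    (hopt : ∀ J' ⊆ I, obj J' ≤ obj J) :
    (∀ i ∈ J, 0 < g i) ∨ (∀ i ∈ J, g i < 0) ∨ obj J = 0 := by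
  set S := ∑ i ∈ J, g i with hS
  -- key lemma: can't remove j with |S - g j| ≥ |S| when S ≠ 0
  have key : ∀ j ∈ J, S ≠ 0 → S ^ 2 ≤ (S - g j) ^ 2 → False := by
    intro j hjJ hSne hle
    set J' := J.erase j with hJ'
    have hJ'I : J' ⊆ I := (Finset.erase_subset j J).trans hJI
    have hsumg : ∑ i ∈ J', g i = S - g j := by
      rw [hJ', Finset.sum_erase_eq_sub hjJ]
    have hS'ne : (S - g j) ≠ 0 := by
      intro h0
      rw [h0] at hle
      have h2 : S ^ 2 = 0 := le_antisymm (by simpa using hle) (sq_nonneg S)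
      exact hSne (by nlinarith [sq_nonneg S])
    have hJ'ne : J'.Nonempty := by
      rcases Finset.eq_empty_or_nonempty J' with he | hne
      · exfalso; rw [he] at hsumg; simp at hsumg; exact hS'ne hsumg.symm
      · exact hne
    have hsumh : ∑ i ∈ J', h i = (∑ i ∈ J, h i) - h j := by
      rw [hJ', Finset.sum_erase_eq_sub hjJ]
    have hD'pos : 0 < lam + ∑ i ∈ J', h i := by
      have : 0 < ∑ i ∈ J', h i :=
        Finset.sum_pos (fun i hi => hpos i (hJ'I hi)) hJ'ne
      linarith
    have hDgt : lam + ∑ i ∈ J', h i < lam + ∑ i ∈ J, h i := by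
      have : 0 < h j := hpos j (hJI hjJ)
      rw [hsumh]; linarith
    have hS2pos : 0 < S ^ 2 := by positivity
    have hineq : obj J < obj J' := by
      rw [hobj, hobj, hsumg, ← hS]
      calc S ^ 2 / (lam + ∑ i ∈ J, h i)
          < S ^ 2 / (lam + ∑ i ∈ J', h i) :=
            div_lt_div_of_pos_left hS2pos hD'pos hDgt
        _ ≤ (S - g j) ^ 2 / (lam + ∑ i ∈ J', h i) := by gcongr
    exact absurd (hopt J' hJ'I) (not_le.mpr hineq)
  rcases lt_trichotomy S 0 with hneg | hzero | hposS
  · right; left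
    intro i hi
    by_contra hgi
    push_neg at hgi
    exact key i hi (ne_of_lt hneg) (by nlinarith)
  · right; right
    rw [hobj, ← hS, hzero]; simp
  · left
    intro i hi
    by_contra hgi
    push_neg at hgi
    exact key i hi (ne_of_gt hposS) (by nlinarith)
end

section
/- Let J ⊆ I be finite with ∑_{i∈J} g i ≥ 0 and let j ∈ J satisfy g j < 0. Then with obj(J) = (∑_{i∈J} g i)²/(λ + ∑_{i∈J} h i), λ ≥ 0, h positive, we have obj(J \ {j}) > obj(J) provided λ + ∑_{i∈J\{j\}} h i > 0. -/
theorem Finset.sq_sum_lt_sq_sum_erase_of_neg {ι R : Type*} [DecidableEq ι] [CommRing R]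
    [LinearOrder R] [IsStrictOrderedRing R] {s : Finset ι} {f : ι → R} {a : ι} (ha : a ∈ s)
    (hs : 0 ≤ ∑ i ∈ s, f i) (hfa : f a < 0) :
    (∑ i ∈ s, f i) ^ 2 < (∑ i ∈ s.erase a, f i) ^ 2 := by
  rw [← Finset.add_sum_erase s f ha] at hs ⊢
  exact sq_lt_sq' (by linarith) (by linarith)

theorem obj_erase_neg_gradient_general {ι : Type*} [DecidableEq ι]
    (g h : ι → ℝ) (hpos : ∀ i, 0 < h i) (lam : ℝ)
    (obj : Finset ι → ℝ)
    (hobj : ∀ J, obj J = (∑ i ∈ J, g i) ^ 2 / (lam + ∑ i ∈ J, h i))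
    (J : Finset ι) (j : ι) (hjJ : j ∈ J)
    (hsum : 0 ≤ ∑ i ∈ J, g i) (hgj : g j < 0)
    (hden : 0 < lam + ∑ i ∈ J.erase j, h i) :
    obj (J.erase j) > obj J := by
  rw [hobj, hobj]
  have hnum := Finset.sq_sum_lt_sq_sum_erase_of_neg hjJ hsum hgj
  have hden_le : lam + ∑ i ∈ J.erase j, h i ≤ lam + ∑ i ∈ J, h i := by
    gcongr lam + ?_
    exact Finset.sum_le_sum_of_subset_of_nonneg (J.erase_subset j) fun i _ _ => (hpos i).le
  exact div_lt_div₀ hnum hden_le (sq_nonneg _) hden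

theorem obj_erase_neg_gradient {ι : Type*} [DecidableEq ι]
    (g h : ι → ℝ) (hpos : ∀ i, 0 < h i) (lam : ℝ) (hlam : 0 ≤ lam)
    (obj : Finset ι → ℝ)
    (hobj : ∀ J, obj J = (∑ i ∈ J, g i) ^ 2 / (lam + ∑ i ∈ J, h i))
    (J : Finset ι) (j : ι) (hjJ : j ∈ J)
    (hsum : 0 ≤ ∑ i ∈ J, g i) (hgj : g j < 0)
    (hden : 0 < lam + ∑ i ∈ J.erase j, h i) :
    obj (J.erase j) > obj J :=
  obj_erase_neg_gradient_general g h hpos lam obj hobj J j hjJ hsum hgj hden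
end

section
/- Let g, h : Fin m → ℝ with h i > 0 for all i, λ ≥ 0, and suppose g 1/h 1 ≥ g 2/h 2 ≥ ... ≥ g m/h m. Define obj(J) = (∑_{i∈J} g i)²/(λ + ∑_{i∈J} h i). If J ⊆ {i : g i > 0} is nonempty and not a prefix of the ratio-sorted order restricted to positive-gradient indices (i.e., there exist j ∈ J and i ∉ J with g i > 0 and g i/h i ≥ g j/h j), then obj(J) ≤ max{obj(J \ {j}), obj(J ∪ {i})} for such a pair i, j (assuming λ > 0 or |J| > 1). -/
/-!
Write `S = ∑_J g` and `D = λ + ∑_J h`. Cross-multiplying, removing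
`j` fails to increase `S² / D` only if `g j / h j > S / (2D)`, and adding `i` fails to increase it
only if `g i / h i < S / (2D)`: the two cannot happen together when `g i / h i ≥ g j / h j`.
-/

open Finset

lemma pos_and_div_lt_div_of_sq_div_sub_lt {S D g h : ℝ} (hh : 0 < h) (hg : 0 < g)
    (hDh : 0 < D - h) (hlt : (S - g) ^ 2 / (D - h) < S ^ 2 / D) :
    0 < S ∧ S / (2 * D) < g / h := by
  have hD : 0 < D := by linarith
  have hcross : S ^ 2 * h + g ^ 2 * D < 2 * S * g * D := by
    nlinarith [(div_lt_div_iff₀ hDh hD).mp hlt]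
  have hS : 0 < S := by nlinarith [mul_pos (pow_pos hg 2) hD, mul_nonneg (sq_nonneg S) hh.le, mul_pos hg hD]
  refine ⟨hS, (div_lt_div_iff₀ (by positivity) hh).mpr ?_⟩
  nlinarith [mul_pos (pow_pos hg 2) hD]

lemma div_lt_div_of_sq_div_add_lt {S D g h : ℝ} (hS : 0 < S) (hD : 0 < D) (hh : 0 < h)
    (hlt : (S + g) ^ 2 / (D + h) < S ^ 2 / D) :
    g / h < S / (2 * D) := by
  have hcross : 2 * S * g * D + g ^ 2 * D < S ^ 2 * h := by
    nlinarith [(div_lt_div_iff₀ (add_pos hD hh) hD).mp hlt]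
  rw [div_lt_div_iff₀ hh (by positivity)]
  nlinarith [mul_nonneg (sq_nonneg g) hD.le]

theorem exchange_step_general {m : ℕ} (g h : Fin m → ℝ) (hpos : ∀ i, 0 < h i)
    (lam : ℝ) (hlam : 0 ≤ lam)
    (obj : Finset (Fin m) → ℝ)
    (hobj : ∀ J, obj J = (∑ i ∈ J, g i) ^ 2 / (lam + ∑ i ∈ J, h i))
    (J : Finset (Fin m)) (hJpos : ∀ i ∈ J, 0 < g i)
    (i j : Fin m) (hjJ : j ∈ J) (hiJ : i ∉ J)
    (hij : g i * h j ≥ g j * h i)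
    (hreg : 0 < lam ∨ 1 < J.card) :
    obj J ≤ max (obj (J.erase j)) (obj (insert i J)) := by
  set S := ∑ x ∈ J, g x
  set D := lam + ∑ x ∈ J, h x
  have herase : obj (J.erase j) = (S - g j) ^ 2 / (D - h j) := by
    rw [hobj, sum_erase_eq_sub hjJ, sum_erase_eq_sub hjJ, add_sub_assoc]
  have hinsert : obj (insert i J) = (S + g i) ^ 2 / (D + h i) := by
    rw [hobj, sum_insert hiJ, sum_insert hiJ, add_comm (g i), add_comm (h i), add_assoc]
  have hDj : 0 < D - h j := by
    rw [add_sub_assoc, ← sum_erase_eq_sub hjJ]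
    rcases hreg with hlam_pos | hcard
    · exact add_pos_of_pos_of_nonneg hlam_pos (sum_nonneg fun x _ => (hpos x).le)
    · exact add_pos_of_nonneg_of_pos hlam
        (sum_pos (fun x _ => hpos x) (one_lt_card_iff_nontrivial.mp hcard).erase_nonempty)
  by_contra! hlt
  rw [max_lt_iff, herase, hinsert, hobj J] at hlt
  obtain ⟨hS, hj_ratio⟩ := pos_and_div_lt_div_of_sq_div_sub_lt (hpos j) (hJpos j hjJ) hDj hlt.1
  have hi_ratio := div_lt_div_of_sq_div_add_lt hS (by linarith [hpos j]) (hpos i) hlt.2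
  have hratio : g j / h j ≤ g i / h i := (div_le_div_iff₀ (hpos j) (hpos i)).mpr (by linarith)
  linarith

/-- Exchange step: a non-prefix positive-gradient set is dominated by removing the
violating element `j` or adding the violating element `i`. -/
theorem exchange_step {m : ℕ} (g h : Fin m → ℝ) (hpos : ∀ i, 0 < h i)
    (lam : ℝ) (hlam : 0 ≤ lam)
    (hsorted : ∀ i j : Fin m, i ≤ j → g i * h j ≥ g j * h i)
    (obj : Finset (Fin m) → ℝ)
    (hobj : ∀ J, obj J = (∑ i ∈ J, g i) ^ 2 / (lam + ∑ i ∈ J, h i))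
    (J : Finset (Fin m)) (hJpos : ∀ i ∈ J, 0 < g i) (hJne : J.Nonempty)
    (i j : Fin m) (hjJ : j ∈ J) (hiJ : i ∉ J) (hgi : 0 < g i)
    (hij : g i * h j ≥ g j * h i)
    (hreg : 0 < lam ∨ 1 < J.card) :
    obj J ≤ max (obj (J.erase j)) (obj (insert i J)) :=
  exchange_step_general g h hpos lam hlam obj hobj J hJpos i j hjJ hiJ hij hreg
end

section
/- Let I be a finite set, g, h : I → ℝ with h i > 0, λ ≥ 0 with λ > 0 or |I| ≥ 1 ensuring denominators positive. Order the elements i₁, ..., i_m of I so that g i₁/h i₁ ≥ ... ≥ g i_m/h i_m. Then the maximum of obj(J) = (∑_{i∈J} g i)²/(λ + ∑_{i∈J} h i) over all J ⊆ I is attained by some J* that is either a prefix {i₁,...,i_l} with g i_l > 0, or a suffix {i_{m-l+1},...,i_m} with g i_{m-l+1} < 0, or the empty set. -/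
/-- Theorem 1: the maximum of `obj` over all subsets of a ratio-sorted sequence is
attained by a prefix (whose last gradient is positive), a suffix (whose first
gradient is negative), or the empty set. -/
theorem greedy_bound {m : ℕ} (g h : Fin m → ℝ) (hpos : ∀ i, 0 < h i)
    (lam : ℝ) (hlam : 0 ≤ lam)
    (hsorted : ∀ i j : Fin m, i ≤ j → g i * h j ≥ g j * h i)
    (obj : Finset (Fin m) → ℝ)
    (hobj : ∀ J, obj J = (∑ i ∈ J, g i) ^ 2 / (lam + ∑ i ∈ J, h i))
    (hempty : obj ∅ = 0) :
    ∃ J : Finset (Fin m), (∀ J' : Finset (Fin m), obj J' ≤ obj J) ∧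
      (J = ∅ ∨
       (∃ l : Fin m, J = Finset.univ.filter (fun i => i.val ≤ l.val) ∧ 0 < g l) ∨
       (∃ l : Fin m, J = Finset.univ.filter (fun i => l.val ≤ i.val) ∧ g l < 0)) := by
  classical
  set P : Finset (Fin m) → Prop := fun K =>
    K = ∅ ∨
    (∃ l : Fin m, K = Finset.univ.filter (fun i => i.val ≤ l.val) ∧ 0 < g l) ∨
    (∃ l : Fin m, K = Finset.univ.filter (fun i => l.val ≤ i.val) ∧ g l < 0) with hP
  have key : ∀ J : Finset (Fin m), ∃ C, P C ∧ obj J ≤ obj C := by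
    intro J
    by_cases hS0 : (∑ i ∈ J, g i) = 0
    · refine ⟨∅, Or.inl rfl, ?_⟩
      rw [hobj J, hS0, hempty]
      simp
    have hJne : J.Nonempty := by
      rcases Finset.eq_empty_or_nonempty J with h' | h'
      · exact absurd (by simp [h']) hS0
      · exact h'
    set S := ∑ i ∈ J, g i with hSdef
    set D := lam + ∑ i ∈ J, h i with hDdef
    have hD : 0 < D := by
      have : 0 < ∑ i ∈ J, h i := Finset.sum_pos (fun i _ => hpos i) hJne
      rw [hDdef]; linarith
    set θ := S / D with hθdef
    have hθD : θ * D = S := by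
      rw [hθdef]; field_simp
    have hformula : obj J = (∑ i ∈ J, (2 * θ * g i - θ ^ 2 * h i)) - θ ^ 2 * lam := by
      rw [hobj J]
      have hsum : ∑ i ∈ J, (2 * θ * g i - θ ^ 2 * h i)
          = 2 * θ * S - θ ^ 2 * (∑ i ∈ J, h i) := by
        rw [Finset.sum_sub_distrib, ← Finset.mul_sum, ← Finset.mul_sum, hSdef]
      have hH : (∑ i ∈ J, h i) = D - lam := by rw [hDdef]; ring
      rw [hsum, hH, hθdef]
      field_simp
      rw [← hSdef]
      have hD' : D ≠ 0 := hD.ne'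
      calc _ = S ^ 2 * (D * D⁻¹) * D := by ring
        _ = D * S ^ 2 := by rw [mul_inv_cancel₀ hD']; ring
        _ = S ^ 2 * (D * 2 - (D - lam) - lam) := by ring
    set C := Finset.univ.filter (fun i => 0 < 2 * θ * g i - θ ^ 2 * h i) with hCdef
    have hsumle : (∑ i ∈ J, (2 * θ * g i - θ ^ 2 * h i))
        ≤ ∑ i ∈ C, (2 * θ * g i - θ ^ 2 * h i) := by
      have h1 : ∑ i ∈ J ∩ C, (2 * θ * g i - θ ^ 2 * h i)
          ≤ ∑ i ∈ C, (2 * θ * g i - θ ^ 2 * h i) := by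
        refine Finset.sum_le_sum_of_subset_of_nonneg Finset.inter_subset_right ?_
        intro i hi _
        exact le_of_lt ((Finset.mem_filter.1 hi).2)
      have h2 : ∑ i ∈ J \ C, (2 * θ * g i - θ ^ 2 * h i) ≤ 0 := by
        refine Finset.sum_nonpos ?_
        intro i hi
        have hni := (Finset.mem_sdiff.1 hi).2
        rw [hCdef] at hni
        simp only [Finset.mem_filter, Finset.mem_univ, true_and, not_lt] at hni
        linarith
      have h3 : ∑ i ∈ J ∩ C, (2 * θ * g i - θ ^ 2 * h i)
          + ∑ i ∈ J \ C, (2 * θ * g i - θ ^ 2 * h i)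
          = ∑ i ∈ J, (2 * θ * g i - θ ^ 2 * h i) :=
        Finset.sum_inter_add_sum_sdiff J C _
      linarith
    by_cases hCe : C = ∅
    · refine ⟨∅, Or.inl rfl, ?_⟩
      rw [hempty, hformula]
      have hz : ∑ i ∈ C, (2 * θ * g i - θ ^ 2 * h i) = 0 := by rw [hCe]; simp
      nlinarith [mul_nonneg (sq_nonneg θ) hlam]
    · have hCne : C.Nonempty := Finset.nonempty_iff_ne_empty.2 hCe
      have hDC : 0 < lam + ∑ i ∈ C, h i := by
        have : 0 < ∑ i ∈ C, h i := Finset.sum_pos (fun i _ => hpos i) hCne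
        linarith
      have hineq : obj J ≤ obj C := by
        rw [hformula, hobj C]
        have hC2 : ∑ i ∈ C, (2 * θ * g i - θ ^ 2 * h i)
            = 2 * θ * (∑ i ∈ C, g i) - θ ^ 2 * (∑ i ∈ C, h i) := by
          rw [Finset.sum_sub_distrib, ← Finset.mul_sum, ← Finset.mul_sum]
        rw [le_div_iff₀ hDC]
        nlinarith [sq_nonneg ((∑ i ∈ C, g i) - θ * (lam + ∑ i ∈ C, h i)),
          mul_nonneg (sq_nonneg θ) hlam]
      refine ⟨C, ?_, hineq⟩
      rcases lt_trichotomy S 0 with hSneg | hSz | hSpos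
      · -- θ < 0 : C is a suffix
        have hθneg : θ < 0 := div_neg_of_neg_of_pos hSneg hD
        set l := C.min' hCne with hldef
        have hlC : l ∈ C := C.min'_mem hCne
        have hφl : 0 < 2 * θ * g l - θ ^ 2 * h l := (Finset.mem_filter.1 hlC).2
        have hgl : g l < 0 := by
          nlinarith [hpos l, mul_pos (mul_pos (neg_pos.2 hθneg) (neg_pos.2 hθneg)) (hpos l)]
        refine Or.inr (Or.inr ⟨l, ?_, hgl⟩)
        ext i
        simp only [hCdef, Finset.mem_filter, Finset.mem_univ, true_and]
        constructor
        · intro hi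
          have : l ≤ i := Finset.min'_le C i (by
            rw [hCdef]; exact Finset.mem_filter.2 ⟨Finset.mem_univ _, hi⟩)
          exact this
        · intro hil
          have hle : l ≤ i := hil
          have hs := hsorted l i hle
          nlinarith [hpos i, hpos l, mul_pos hφl (hpos i)]
      · exact absurd hSz hS0
      · -- θ > 0 : C is a prefix
        have hθpos : 0 < θ := div_pos hSpos hD
        set l := C.max' hCne with hldef
        have hlC : l ∈ C := C.max'_mem hCne
        have hφl : 0 < 2 * θ * g l - θ ^ 2 * h l := (Finset.mem_filter.1 hlC).2
        have hgl : 0 < g l := by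
          nlinarith [hpos l, mul_pos (mul_pos hθpos hθpos) (hpos l)]
        refine Or.inr (Or.inl ⟨l, ?_, hgl⟩)
        ext i
        simp only [hCdef, Finset.mem_filter, Finset.mem_univ, true_and]
        constructor
        · intro hi
          have : i ≤ l := Finset.le_max' C i (by
            rw [hCdef]; exact Finset.mem_filter.2 ⟨Finset.mem_univ _, hi⟩)
          exact this
        · intro hil
          have hle : i ≤ l := hil
          have hs := hsorted i l hle
          nlinarith [hpos i, hpos l, mul_pos hφl (hpos i)]
  obtain ⟨J, hJmem, hJmax⟩ := Finset.exists_max_image (Finset.univ.filter P) obj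
    ⟨∅, Finset.mem_filter.2 ⟨Finset.mem_univ _, Or.inl rfl⟩⟩
  refine ⟨J, ?_, (Finset.mem_filter.1 hJmem).2⟩
  intro J'
  obtain ⟨C, hCG, hle⟩ := key J'
  exact hle.trans (hJmax C (Finset.mem_filter.2 ⟨Finset.mem_univ _, hCG⟩))
end

section
/- With the same setup, if additionally c = crt(q p_j) < i, then q' ⊭ p_c; hence (combining with the previous property) q' p_j is not a core query for any core query q' having q p_i as a prefix. -/
/-- Extent of a query: intersection of the extents of its propositions. -/
def Iext (ext : ℕ → Set ℕ) (q : Finset ℕ) : Set ℕ := {x | ∀ i ∈ q, x ∈ ext i}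

/-- Core queries (Uno et al.). -/
inductive Core (ext : ℕ → Set ℕ) : Finset ℕ → Prop
  | top : Core ext ∅
  | aug (q : Finset ℕ) (i : ℕ) (hq : Core ext q) (htail : ∀ j ∈ q, j < i)
      (hni : ¬ Iext ext q ⊆ ext i)
      (hpp : ∀ j < i, Iext ext (insert i q) ⊆ ext j → Iext ext q ⊆ ext j) :
      Core ext (insert i q)

/-- `q` is a prefix of `q'`: `q'` arises from `q` by successive tail augmentations. -/
def IsPrefix (q q' : Finset ℕ) : Prop :=
  q ⊆ q' ∧ ∀ a ∈ q', a ∉ q → ∀ b ∈ q, b < a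

/-- Peeling lemma: if a core query implies `p_c`, so does any sub-query whose
missing elements all exceed `c`. -/
lemma peel (ext : ℕ → Set ℕ) (c : ℕ) :
    ∀ r, Core ext r → ∀ s, s ⊆ r → (∀ a ∈ r, a ∉ s → c < a) →
      Iext ext r ⊆ ext c → Iext ext s ⊆ ext c := by
  intro r hr
  induction hr with
  | top =>
    intro s hs _ h
    rw [Finset.subset_empty.mp hs]
    exact h
  | aug t k ht htail hni hpp ih =>
    intro s hs hgt hsub
    by_cases hck : c < k
    · have h1 : Iext ext t ⊆ ext c := hpp c hck hsub
      have h2 : Iext ext (s.erase k) ⊆ ext c := by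
        refine ih (s.erase k) ?_ ?_ h1
        · intro a ha
          rcases Finset.mem_erase.mp ha with ⟨hne, has⟩
          rcases Finset.mem_insert.mp (hs has) with rfl | h
          · exact absurd rfl hne
          · exact h
        · intro a ha hna
          refine hgt a (Finset.mem_insert_of_mem ha) (fun h => hna ?_)
          exact Finset.mem_erase.mpr ⟨Nat.ne_of_lt (htail a ha), h⟩
      intro x hx
      exact h2 (fun a ha => hx a (Finset.mem_of_mem_erase ha))
    · have hrs : insert k t ⊆ s := by
        intro a ha
        by_contra hna
        have hca := hgt a ha hna
        rcases Finset.mem_insert.mp ha with rfl | h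
        · exact hck hca
        · exact hck (lt_trans hca (htail a h))
      intro x hx
      exact hsub (fun a ha => hx a (hrs ha))

/-- Theorem 2, property (5): if additionally `c = crt(q pⱼ) < i`, then `q' ⊭ p_c`,
and hence `q' pⱼ` is not a core query. -/
theorem not_core_of_crt_lt (ext : ℕ → Set ℕ) (q q' : Finset ℕ) (i j c : ℕ)
    (hq : Core ext q) (hq' : Core ext q')
    (htaili : ∀ b ∈ q, b < i) (hpre : IsPrefix (insert i q) q')
    (hij : i < j) (htailj : ∀ b ∈ q, b < j)
    (hc : c = sInf {a | Iext ext (insert j q) ⊆ ext a ∧ ¬ Iext ext q ⊆ ext a})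
    (hcmem : Iext ext (insert j q) ⊆ ext c ∧ ¬ Iext ext q ⊆ ext c)
    (hci : c < i) :
    ¬ Iext ext q' ⊆ ext c ∧ ¬ Core ext (insert j q') := by
  have h1 : ¬ Iext ext q' ⊆ ext c := by
    intro hsub
    apply hcmem.2
    refine peel ext c q' hq' q ?_ ?_ hsub
    · intro a ha
      exact hpre.1 (Finset.mem_insert_of_mem ha)
    · intro a ha hna
      by_cases hai : a ∈ insert i q
      · rcases Finset.mem_insert.mp hai with rfl | h
        · exact hci
        · exact absurd h hna
      · exact lt_trans hci (hpre.2 a ha hai i (Finset.mem_insert_self i q))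
  refine ⟨h1, fun hcore => h1 ?_⟩
  refine peel ext c (insert j q') hcore q' (Finset.subset_insert _ _) ?_ ?_
  · intro a ha hna
    rcases Finset.mem_insert.mp ha with rfl | h
    · exact lt_trans hci hij
    · exact absurd h hna
  · intro x hx
    apply hcmem.1
    intro a ha
    rcases Finset.mem_insert.mp ha with rfl | h
    · exact hx a (Finset.mem_insert_self a q')
    · exact hx a (Finset.mem_insert_of_mem (hpre.1 (Finset.mem_insert_of_mem h)))
end
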